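/- arXiv:2503.12020 — 3 statements merged into one kernel-verified Lean document; each statement's English description precedes it below -/
import Mathlib

section
/- For every dimension d ≥ 2, every horizon K with K ≥ 1.5·d², every variance level σ ∈ (0,1], and every deterministic algorithm π for the K-round hypercube instance, the Bayes expected pseudo-regret, where the weight vector μ is drawn uniformly at random from {−Δ,Δ}^d with Δ = 1/√(96K), satisfies E_μ E[Regret(K)] ≥ d·√(K·σ²)/(8·√6). -/
/-!
Assouad's method. Flipping the sign `μ i` moves every success probability `1/3 + ⟨μ, a⟩` by `±2Δ`,
and `d Δ ≤ 1/12` keeps these probabilities in `[1/4, 5/12]`, so each round contributes at most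
`64Δ²/3` to the χ²-divergence between the laws of the outcome sequence under `μ` and under the
flipped vector. The χ²-divergence tensorizes over the `K` rounds, hence is at most
`e^{2/9} - 1 < 1/4` when `K Δ² ≤ 1/96`, and by Cauchy–Schwarz the two laws are at `ℓ¹`-distance at
most `1/2`. So, averaged over `μ`, the `k`-th action gets the sign `μ i` wrong with probability at
least `1/4`, and every wrong sign costs `2σΔ` of regret; summing over `k` and `i` gives `σΔKd/2`.
-/

open Finset

namespace HypercubeBandit

/-- An element of the hypercube `{−1,1}^d`, encoded by its sign pattern. -/
abbrev Act (d : ℕ) := Fin d → Bool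

/-- The real vector in `{−1,1}^d ⊆ ℝ^d` encoded by a sign pattern. -/
noncomputable def embed {d : ℕ} (a : Act d) : Fin d → ℝ := fun i => if a i then 1 else -1

/-- The weight vector in `{−Δ,Δ}^d ⊆ ℝ^d` encoded by a sign pattern. -/
noncomputable def wvec {d : ℕ} (Δ : ℝ) (μ : Act d) : Fin d → ℝ := fun i => if μ i then Δ else -Δ

/-- The standard inner product on `ℝ^d`. -/
noncomputable def ip {d : ℕ} (v w : Fin d → ℝ) : ℝ := ∑ i, v i * w i

/-- A deterministic algorithm: a map choosing, from the history of past
(action, reward) pairs, the next action of the hypercube (the round index is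
encoded by the length of the history). -/
def Alg (d : ℕ) := List ((Fin d → ℝ) × ℝ) → Act d

/-- The history of (action, reward) pairs after `k` rounds, given the Bernoulli
outcomes `ω`: in round `k` the reward is `σ · B` with `B = ω k ∈ {0,1}`. -/
noncomputable def hist {d : ℕ} (π : Alg d) (σ : ℝ) (ω : ℕ → Bool) :
    ℕ → List ((Fin d → ℝ) × ℝ)
  | 0 => []
  | k + 1 =>
      hist π σ ω k ++ [(embed (π (hist π σ ω k)), σ * (if ω k then 1 else 0))]

/-- The action selected by the algorithm in round `k`. -/
noncomputable def act {d : ℕ} (π : Alg d) (σ : ℝ) (ω : ℕ → Bool) (k : ℕ) : Act d :=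
  π (hist π σ ω k)

/-- The Bernoulli success probability of action `a`: `1/3 + ⟨μ, a⟩`. -/
noncomputable def bp {d : ℕ} (Δ : ℝ) (μ a : Act d) : ℝ :=
  1 / 3 + ip (wvec Δ μ) (embed a)

/-- Extension of a finite outcome sequence to `ℕ`. -/
def ext {K : ℕ} (ω : Fin K → Bool) : ℕ → Bool :=
  fun j => if h : j < K then ω ⟨j, h⟩ else false

/-- The probability of the trajectory determined by the Bernoulli outcomes `ω`
(rewards are drawn independently across rounds given the chosen actions). -/
noncomputable def trajP (d K : ℕ) (Δ σ : ℝ) (π : Alg d) (μ : Act d)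
    (ω : Fin K → Bool) : ℝ :=
  ∏ k : Fin K,
    (if ω k then bp Δ μ (act π σ (ext ω) k)
     else 1 - bp Δ μ (act π σ (ext ω) k))

/-- The maximal mean `max_{a ∈ {−1,1}^d} ⟨μ, a⟩`. -/
noncomputable def maxRew (d : ℕ) (Δ : ℝ) (μ : Act d) : ℝ :=
  Finset.univ.sup' Finset.univ_nonempty (fun a : Act d => ip (wvec Δ μ) (embed a))

/-- The pseudo-regret `∑_{k=1}^K σ·(max_{a∈𝒜} ⟨μ,a⟩ − ⟨μ, a_k⟩)`. -/
noncomputable def regret (d K : ℕ) (Δ σ : ℝ) (π : Alg d) (μ : Act d)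
    (ω : Fin K → Bool) : ℝ :=
  ∑ k : Fin K, σ * (maxRew d Δ μ - ip (wvec Δ μ) (embed (act π σ (ext ω) k)))

/-- The Bayes expected pseudo-regret: `μ` is uniform on `{−Δ,Δ}^d` with
`Δ = 1/√(96K)`, and the rewards follow scaled Bernoulli distributions
`σ·B(1/3 + ⟨μ,a⟩)`. -/
noncomputable def bayesRegret (d K : ℕ) (σ : ℝ) (π : Alg d) : ℝ :=
  (1 / 2 ^ d) * ∑ μ : Act d, ∑ ω : Fin K → Bool,
    trajP d K (1 / Real.sqrt (96 * K)) σ π μ ω *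
      regret d K (1 / Real.sqrt (96 * K)) σ π μ ω

/-- `p ω k` is the success probability of round `k` given the outcome sequence `ω`. -/
def IsPredictable (p : (ℕ → Bool) → ℕ → ℝ) : Prop :=
  ∀ ω ω' k, (∀ j < k, ω j = ω' j) → p ω k = p ω' k

noncomputable def pathProb (p : (ℕ → Bool) → ℕ → ℝ) (K : ℕ) (ω : Fin K → Bool) : ℝ :=
  ∏ k : Fin K, if ω k then p (ext ω) k else 1 - p (ext ω) k

section PathProb

variable {p q : (ℕ → Bool) → ℕ → ℝ}

lemma ext_snoc_of_lt {K : ℕ} (ω : Fin K → Bool) (b : Bool) {j : ℕ} (hj : j < K) :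
    ext (Fin.snoc ω b : Fin (K + 1) → Bool) j = ext ω j := by
  simp only [ext, dif_pos hj, dif_pos (hj.trans K.lt_succ_self)]
  exact Fin.snoc_castSucc (α := fun _ => Bool) (i := ⟨j, hj⟩) ..

lemma pathProb_snoc (hp : IsPredictable p) {K : ℕ} (ω : Fin K → Bool) (b : Bool) :
    pathProb p (K + 1) (Fin.snoc ω b)
      = pathProb p K ω * (if b then p (ext ω) K else 1 - p (ext ω) K) := by
  have hpast : ∀ k ≤ K, p (ext (Fin.snoc ω b : Fin (K + 1) → Bool)) k = p (ext ω) k :=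
    fun k hk => hp _ _ _ fun j hj => ext_snoc_of_lt ω b (hj.trans_le hk)
  rw [pathProb, Fin.prod_univ_castSucc, Fin.snoc_last, Fin.val_last, hpast K le_rfl]
  congr 1
  refine Finset.prod_congr rfl fun k _ => ?_
  rw [Fin.snoc_castSucc, Fin.val_castSucc, hpast k k.is_lt.le]

lemma sum_fun_fin_succ_bool {K : ℕ} (F : (Fin (K + 1) → Bool) → ℝ) :
    ∑ ω, F ω = ∑ ω : Fin K → Bool, (F (Fin.snoc ω true) + F (Fin.snoc ω false)) := by
  rw [← (Fin.snocEquiv fun _ => Bool).sum_comp, Fintype.sum_prod_type, Fintype.sum_bool,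
    Finset.sum_add_distrib]
  rfl

lemma sum_pathProb (hp : IsPredictable p) : ∀ K, ∑ ω, pathProb p K ω = 1
  | 0 => by simp [pathProb]
  | K + 1 => by
    simp only [sum_fun_fin_succ_bool, pathProb_snoc hp, if_true, Bool.false_eq_true, if_false,
      ← mul_add, add_sub_cancel, mul_one]
    exact sum_pathProb hp K

lemma pathProb_pos (h0 : ∀ ω k, 0 < p ω k) (h1 : ∀ ω k, p ω k < 1) {K : ℕ} (ω : Fin K → Bool) :
    0 < pathProb p K ω :=
  Finset.prod_pos fun k _ => by
    split
    · exact h0 _ _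
    · linarith [h1 (ext ω) k]

/-- The χ²-identity for one Bernoulli round. -/
lemma sq_div_add_sq_div_one_sub {x y : ℝ} (hy0 : 0 < y) (hy1 : y < 1) :
    x ^ 2 / y + (1 - x) ^ 2 / (1 - y) = 1 + (x - y) ^ 2 / (y * (1 - y)) := by
  have : 1 - y ≠ 0 := by linarith
  field_simp
  ring

/-- Tensorization of `1 + χ² = ∑ P² / Q` over the rounds. -/
lemma sum_sq_pathProb_div_le (hp : IsPredictable p) (hq : IsPredictable q)
    (hq0 : ∀ ω k, 0 < q ω k) (hq1 : ∀ ω k, q ω k < 1) {c : ℝ}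
    (hc : ∀ ω k, (p ω k - q ω k) ^ 2 / (q ω k * (1 - q ω k)) ≤ c) :
    ∀ K, ∑ ω, pathProb p K ω ^ 2 / pathProb q K ω ≤ (1 + c) ^ K
  | 0 => by simp [pathProb]
  | K + 1 => by
    have hstep : ∀ ω : Fin K → Bool,
        pathProb p (K + 1) (Fin.snoc ω true) ^ 2 / pathProb q (K + 1) (Fin.snoc ω true)
          + pathProb p (K + 1) (Fin.snoc ω false) ^ 2 / pathProb q (K + 1) (Fin.snoc ω false)
        ≤ pathProb p K ω ^ 2 / pathProb q K ω * (1 + c) := by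
      intro ω
      have hQ := pathProb_pos hq0 hq1 ω
      simp only [pathProb_snoc hp, pathProb_snoc hq, if_true, Bool.false_eq_true, if_false,
        mul_pow, ← div_mul_div_comm, ← mul_add,
        sq_div_add_sq_div_one_sub (hq0 (ext ω) K) (hq1 (ext ω) K)]
      gcongr
      exact hc _ _
    have hc0 : 0 ≤ 1 + c := by
      have := (div_nonneg (sq_nonneg _) (mul_pos (hq0 (fun _ => false) 0)
        (sub_pos.2 (hq1 (fun _ => false) 0))).le).trans (hc (fun _ => false) 0)
      linarith
    calc _ ≤ ∑ ω : Fin K → Bool, pathProb p K ω ^ 2 / pathProb q K ω * (1 + c) := by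
          rw [sum_fun_fin_succ_bool]; exact Finset.sum_le_sum fun ω _ => hstep ω
      _ ≤ (1 + c) ^ K * (1 + c) := by
          rw [← Finset.sum_mul]
          exact mul_le_mul_of_nonneg_right (sum_sq_pathProb_div_le hp hq hq0 hq1 hc K) hc0
      _ = (1 + c) ^ (K + 1) := (pow_succ _ _).symm

end PathProb

lemma sum_abs_sub_le_sqrt {α : Type*} [Fintype α] {P Q : α → ℝ} (hQ : ∀ x, 0 < Q x)
    (hP1 : ∑ x, P x = 1) (hQ1 : ∑ x, Q x = 1) :
    ∑ x, |P x - Q x| ≤ √(∑ x, P x ^ 2 / Q x - 1) := by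
  have hchi : ∑ x, |P x - Q x| ^ 2 / Q x = ∑ x, P x ^ 2 / Q x - 1 := by
    have : ∀ x, |P x - Q x| ^ 2 / Q x = P x ^ 2 / Q x - 2 * P x + Q x := fun x => by
      have := (hQ x).ne'
      rw [sq_abs]; field_simp; ring
    simp only [this, Finset.sum_add_distrib, Finset.sum_sub_distrib, ← Finset.mul_sum, hP1, hQ1]
    ring
  have hCS := Finset.sq_sum_div_le_sum_sq_div Finset.univ (fun x => |P x - Q x|)
    fun x _ => hQ x
  rw [hQ1, div_one, hchi] at hCS
  exact (le_abs_self _).trans (Real.abs_le_sqrt hCS)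

lemma one_sub_sum_abs_sub_le {α : Type*} [Fintype α] (P Q : α → ℝ) (hQ1 : ∑ x, Q x = 1)
    (E : α → Prop) [DecidablePred E] :
    1 - ∑ x, |P x - Q x| ≤ ∑ x with E x, P x + ∑ x with ¬E x, Q x := by
  have hsplit := Finset.sum_filter_add_sum_filter_not Finset.univ E Q
  have hE : ∑ x with E x, (Q x - P x) ≤ ∑ x, |P x - Q x| :=
    calc _ ≤ ∑ x with E x, |P x - Q x| :=
          Finset.sum_le_sum fun x _ => (le_abs_self _).trans (abs_sub_comm _ _).le
      _ ≤ _ := Finset.sum_le_sum_of_subset_of_nonneg (Finset.filter_subset _ _)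
          fun x _ _ => abs_nonneg _
  rw [Finset.sum_sub_distrib] at hE
  linarith

lemma one_add_pow_le_exp {c : ℝ} (hc : 0 ≤ c) (K : ℕ) : (1 + c) ^ K ≤ Real.exp (K * c) := by
  rw [Real.exp_nat_mul]
  exact pow_le_pow_left₀ (by positivity) (by linarith [Real.add_one_le_exp c]) K

lemma exp_two_ninths_le : Real.exp (2 / 9) ≤ 5 / 4 :=
  (Real.exp_bound' (by norm_num) (by norm_num) (n := 3) (by norm_num)).trans
    (by norm_num [Finset.sum_range_succ, Nat.factorial])

section Hypercube

variable {d K : ℕ}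

lemma hist_congr (π : Alg d) (σ : ℝ) {ω ω' : ℕ → Bool} :
    ∀ k, (∀ j < k, ω j = ω' j) → hist π σ ω k = hist π σ ω' k
  | 0, _ => rfl
  | k + 1, h => by
    simp only [hist, hist_congr π σ k fun j hj => h j (hj.trans k.lt_succ_self),
      h k k.lt_succ_self]

lemma isPredictable_bp_act (Δ : ℝ) (μ : Act d) (π : Alg d) (σ : ℝ) :
    IsPredictable fun ω k => bp Δ μ (act π σ ω k) :=
  fun _ _ k h => by simp only [act, hist_congr π σ k h]

lemma trajP_eq_pathProb (Δ σ : ℝ) (π : Alg d) (μ : Act d) :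
    trajP d K Δ σ π μ = pathProb (fun ω k => bp Δ μ (act π σ ω k)) K :=
  rfl

lemma ip_wvec_embed (Δ : ℝ) (μ a : Act d) :
    ip (wvec Δ μ) (embed a) = Δ * (d - 2 * hammingDist a μ) := by
  have hterm : ∀ i, wvec Δ μ i * embed a i = Δ - 2 * Δ * if a i ≠ μ i then 1 else 0 := by
    intro i
    unfold wvec embed
    cases a i <;> cases μ i <;> norm_num <;> ring
  simp only [ip, hterm, Finset.sum_sub_distrib, ← Finset.mul_sum, hammingDist,
    Finset.natCast_card_filter, Finset.sum_const, Finset.card_univ, Fintype.card_fin,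
    nsmul_eq_mul]
  ring

lemma abs_ip_wvec_embed_le {Δ : ℝ} (hΔ : 0 ≤ Δ) (μ a : Act d) :
    |ip (wvec Δ μ) (embed a)| ≤ d * Δ := by
  have hh : (hammingDist a μ : ℝ) ≤ d := by
    exact_mod_cast (hammingDist_le_card_fintype).trans_eq (Fintype.card_fin d)
  rw [ip_wvec_embed, abs_le]
  constructor <;> nlinarith [(Nat.cast_nonneg (hammingDist a μ) : (0 : ℝ) ≤ _)]

lemma bp_mem_Icc {Δ : ℝ} (hΔ : 0 ≤ Δ) (hdΔ : d * Δ ≤ 1 / 12) (μ a : Act d) :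
    bp Δ μ a ∈ Set.Icc (1 / 4) (5 / 12) := by
  have := abs_le.1 ((abs_ip_wvec_embed_le hΔ μ a).trans hdΔ)
  constructor <;> unfold bp <;> linarith [this.1, this.2]

lemma trajP_pos {Δ : ℝ} (σ : ℝ) (π : Alg d) (hΔ : 0 ≤ Δ) (hdΔ : d * Δ ≤ 1 / 12)
    (μ : Act d) (ω : Fin K → Bool) : 0 < trajP d K Δ σ π μ ω :=
  have hp := fun ω k => bp_mem_Icc hΔ hdΔ μ (act π σ ω k)
  pathProb_pos (p := fun ω k => bp Δ μ (act π σ ω k)) (fun ω k => by linarith [(hp ω k).1])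
    (fun ω k => by linarith [(hp ω k).2]) ω

lemma le_maxRew (Δ : ℝ) (μ : Act d) : d * Δ ≤ maxRew d Δ μ := by
  calc (d : ℝ) * Δ = ip (wvec Δ μ) (embed μ) := by rw [ip_wvec_embed, hammingDist_self]; ring
    _ ≤ maxRew d Δ μ := Finset.le_sup' (fun a : Act d => ip (wvec Δ μ) (embed a)) (mem_univ μ)

lemma le_regret {σ : ℝ} (hσ : 0 ≤ σ) (Δ : ℝ) (π : Alg d) (μ : Act d)
    (ω : Fin K → Bool) :
    2 * σ * Δ * ∑ k : Fin K, (hammingDist (act π σ (ext ω) k) μ : ℝ)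
      ≤ regret d K Δ σ π μ ω := by
  rw [regret, Finset.mul_sum]
  refine Finset.sum_le_sum fun k _ => ?_
  have := le_maxRew Δ μ
  rw [ip_wvec_embed]
  nlinarith

def toggle (i : Fin d) (μ : Act d) : Act d :=
  Function.update μ i (!μ i)

lemma toggle_apply_self (i : Fin d) (μ : Act d) : toggle i μ i = !μ i :=
  Function.update_self ..

lemma toggle_involutive (i : Fin d) : Function.Involutive (toggle i) := by
  intro μ
  ext j
  by_cases hj : j = i
  · subst hj; simp [toggle_apply_self]
  · simp [toggle, Function.update_of_ne hj]

lemma sq_bp_sub_bp_toggle (Δ : ℝ) (μ : Act d) (i : Fin d) (a : Act d) :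
    (bp Δ μ a - bp Δ (toggle i μ) a) ^ 2 = 4 * Δ ^ 2 := by
  have hdiff : bp Δ μ a - bp Δ (toggle i μ) a
      = (wvec Δ μ i - wvec Δ (toggle i μ) i) * embed a i := by
    rw [bp, bp, ip, ip, add_sub_add_left_eq_sub, ← Finset.sum_sub_distrib,
      Finset.sum_eq_single i (fun j _ hj => by simp [wvec, toggle, Function.update_of_ne hj])
        (by simp)]
    ring
  simp only [hdiff, wvec, embed, toggle_apply_self]
  cases μ i <;> cases a i <;> norm_num <;> ring

lemma le_sum_sum_filter_ne_of_toggle {α : Type*} [Fintype α] (P : Act d → α → ℝ)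
    (hP : ∀ μ, ∑ x, P μ x = 1) (i : Fin d) {t : ℝ}
    (ht : ∀ μ, ∑ x, |P μ x - P (toggle i μ) x| ≤ t) (f : α → Bool) :
    2 ^ d * (1 - t) / 2 ≤ ∑ μ, ∑ x with f x ≠ μ i, P μ x := by
  set S : Act d → ℝ := fun μ => ∑ x with f x ≠ μ i, P μ x
  have hpair : ∀ μ, 1 - t ≤ S μ + S (toggle i μ) := by
    intro μ
    have hcompl : S (toggle i μ) = ∑ x with ¬f x ≠ μ i, P (toggle i μ) x := by
      refine Finset.sum_congr (Finset.filter_congr fun x _ => ?_) fun _ _ => rfl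
      rw [toggle_apply_self]
      cases f x <;> cases μ i <;> simp
    rw [hcompl]
    linarith [ht μ, one_sub_sum_abs_sub_le (P μ) (P (toggle i μ)) (hP _) (fun x => f x ≠ μ i)]
  have hsum := Finset.sum_le_sum fun μ (_ : μ ∈ Finset.univ) => hpair μ
  rw [Finset.sum_add_distrib, (toggle_involutive i).bijective.sum_comp S, Finset.sum_const,
    Finset.card_univ] at hsum
  simp only [Fintype.card_fun, Fintype.card_bool, Fintype.card_fin, nsmul_eq_mul,
    Nat.cast_pow, Nat.cast_ofNat] at hsum
  linarith

lemma sum_abs_trajP_sub_trajP_toggle_le {Δ : ℝ} (σ : ℝ) (π : Alg d) (hΔ : 0 ≤ Δ)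
    (hdΔ : d * Δ ≤ 1 / 12) (hKΔ : K * Δ ^ 2 ≤ 1 / 96) (μ : Act d) (i : Fin d) :
    ∑ ω, |trajP d K Δ σ π μ ω - trajP d K Δ σ π (toggle i μ) ω| ≤ 1 / 2 := by
  set q := fun ω k => bp Δ (toggle i μ) (act π σ ω k)
  have hq : ∀ ω k, q ω k ∈ Set.Icc (1 / 4) (5 / 12) :=
    fun ω k => bp_mem_Icc hΔ hdΔ (toggle i μ) (act π σ ω k)
  have hq0 : ∀ ω k, 0 < q ω k := fun ω k => by linarith [(hq ω k).1]
  have hq1 : ∀ ω k, q ω k < 1 := fun ω k => by linarith [(hq ω k).2]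
  have hstep : ∀ ω k, (bp Δ μ (act π σ ω k) - q ω k) ^ 2 / (q ω k * (1 - q ω k))
      ≤ 64 * Δ ^ 2 / 3 := by
    intro ω k
    have hvar : 3 / 16 ≤ q ω k * (1 - q ω k) := by
      nlinarith [mul_nonneg (sub_nonneg.2 (hq ω k).1) (sub_nonneg.2 (hq ω k).2)]
    rw [sq_bp_sub_bp_toggle, div_le_iff₀ (by linarith)]
    nlinarith [mul_le_mul_of_nonneg_left hvar (sq_nonneg Δ)]
  have hchi : ∑ ω, pathProb _ K ω ^ 2 / pathProb q K ω ≤ 5 / 4 :=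
    calc _ ≤ (1 + 64 * Δ ^ 2 / 3) ^ K :=
          sum_sq_pathProb_div_le (isPredictable_bp_act Δ μ π σ)
            (isPredictable_bp_act Δ _ π σ) hq0 hq1 hstep K
      _ ≤ Real.exp (K * (64 * Δ ^ 2 / 3)) := one_add_pow_le_exp (by positivity) K
      _ ≤ Real.exp (2 / 9) := Real.exp_le_exp.2 (by nlinarith)
      _ ≤ 5 / 4 := exp_two_ninths_le
  rw [trajP_eq_pathProb, trajP_eq_pathProb]
  calc _ ≤ √(∑ ω, pathProb _ K ω ^ 2 / pathProb q K ω - 1) :=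
        sum_abs_sub_le_sqrt (trajP_pos σ π hΔ hdΔ _)
          (sum_pathProb (isPredictable_bp_act Δ μ π σ) K)
          (sum_pathProb (isPredictable_bp_act Δ _ π σ) K)
    _ ≤ √((1 / 2) ^ 2) := Real.sqrt_le_sqrt (by linarith)
    _ = 1 / 2 := Real.sqrt_sq (by norm_num)

lemma le_sum_mul_regret {σ : ℝ} (hσ : 0 ≤ σ) (Δ : ℝ) (π : Alg d) (μ : Act d)
    (w : (Fin K → Bool) → ℝ) (hw : ∀ ω, 0 ≤ w ω) :
    2 * σ * Δ * ∑ k : Fin K, ∑ i, ∑ ω with act π σ (ext ω) k i ≠ μ i, w ω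
      ≤ ∑ ω, w ω * regret d K Δ σ π μ ω := by
  calc _ = ∑ ω, w ω * (2 * σ * Δ * ∑ k : Fin K, (hammingDist (act π σ (ext ω) k) μ : ℝ)) := by
        simp only [hammingDist, Finset.natCast_card_filter, Finset.sum_filter, Finset.mul_sum,
          mul_ite, mul_one, mul_zero]
        rw [Finset.sum_comm_cycle]
        simp only [mul_comm]
    _ ≤ _ := Finset.sum_le_sum fun ω _ =>
        mul_le_mul_of_nonneg_left (le_regret hσ Δ π μ ω) (hw ω)

noncomputable def bayesRegretAt (d K : ℕ) (Δ σ : ℝ) (π : Alg d) : ℝ :=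
  (1 / 2 ^ d) * ∑ μ : Act d, ∑ ω : Fin K → Bool, trajP d K Δ σ π μ ω * regret d K Δ σ π μ ω

lemma le_bayesRegretAt {Δ σ : ℝ} (π : Alg d) (hσ : 0 ≤ σ) (hΔ : 0 ≤ Δ)
    (hdΔ : d * Δ ≤ 1 / 12) (hKΔ : K * Δ ^ 2 ≤ 1 / 96) :
    σ * Δ * K * d / 2 ≤ bayesRegretAt d K Δ σ π := by
  have hmiss (k : Fin K) (i : Fin d) :
      2 ^ d / 4 ≤ ∑ μ, ∑ ω with act π σ (ext ω) k i ≠ μ i, trajP d K Δ σ π μ ω := by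
    have := le_sum_sum_filter_ne_of_toggle (trajP d K Δ σ π)
      (fun μ => sum_pathProb (isPredictable_bp_act Δ μ π σ) K) i
      (sum_abs_trajP_sub_trajP_toggle_le σ π hΔ hdΔ hKΔ · i) fun ω => act π σ (ext ω) k i
    linarith
  calc σ * Δ * K * d / 2 = 1 / 2 ^ d * (2 * σ * Δ * ∑ _k : Fin K, ∑ _i : Fin d, 2 ^ d / 4) := by
        simp only [Finset.sum_const, Finset.card_univ, Fintype.card_fin, nsmul_eq_mul]
        field_simp
        ring
    _ ≤ 1 / 2 ^ d * (2 * σ * Δ * ∑ k : Fin K, ∑ i : Fin d, ∑ μ,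
          ∑ ω with act π σ (ext ω) k i ≠ μ i, trajP d K Δ σ π μ ω) := by
        gcongr with k _ i _
        exact hmiss k i
    _ = 1 / 2 ^ d * ∑ μ, 2 * σ * Δ * ∑ k : Fin K, ∑ i : Fin d,
          ∑ ω with act π σ (ext ω) k i ≠ μ i, trajP d K Δ σ π μ ω := by
        simp only [Finset.mul_sum]
        exact Finset.sum_comm_cycle
    _ ≤ bayesRegretAt d K Δ σ π := by
        rw [bayesRegretAt]
        gcongr with μ
        exact le_sum_mul_regret hσ Δ π μ _ fun ω => (trajP_pos σ π hΔ hdΔ μ ω).le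

end Hypercube

theorem fixed_variance_bayes_regret_lower_bound_general
    (d K : ℕ) (σ : ℝ) (π : Alg d)
    (hK : (3 : ℝ) / 2 * (d : ℝ) ^ 2 ≤ (K : ℝ))
    (hσ0 : 0 < σ) :
    (d : ℝ) * Real.sqrt ((K : ℝ) * σ ^ 2) / (8 * Real.sqrt 6) ≤
      bayesRegret d K σ π := by
  set Δ := 1 / √(96 * (K : ℝ)) with hΔ
  have hΔ0 : 0 ≤ Δ := by positivity
  have hKΔ : K * Δ ^ 2 ≤ 1 / 96 :=
    calc (K : ℝ) * Δ ^ 2 = K / K / 96 := by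
          rw [hΔ, div_pow, Real.sq_sqrt (by positivity)]; ring
      _ ≤ 1 / 96 := by gcongr; exact div_self_le_one _
  have hdΔ : d * Δ ≤ 1 / 12 := by
    have hsq : (d * Δ) ^ 2 ≤ (1 / 12) ^ 2 := by
      nlinarith [mul_le_mul_of_nonneg_right hK (sq_nonneg Δ)]
    exact (abs_le_of_sq_le_sq' hsq (by norm_num)).2
  have hΔK : Δ * K = √K / (4 * √6) := by
    have h96 : √96 = 4 * √6 := by
      rw [show (96 : ℝ) = 4 ^ 2 * 6 by norm_num, Real.sqrt_mul (by norm_num),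
        Real.sqrt_sq (by norm_num)]
    rw [hΔ, Real.sqrt_mul (by norm_num), one_div_mul_eq_div, div_mul_eq_div_div_swap,
      Real.div_sqrt, h96]
  calc (d : ℝ) * √(K * σ ^ 2) / (8 * √6) = σ * Δ * K * d / 2 := by
        rw [Real.sqrt_mul' _ (sq_nonneg σ), Real.sqrt_sq hσ0.le, mul_assoc σ, hΔK]
        field_simp
        ring
    _ ≤ bayesRegret d K σ π := le_bayesRegretAt π hσ0.le hΔ0 hdΔ hKΔ

/-- for every `d ≥ 2`, `K ≥ 1.5·d²`, `σ ∈ (0,1]` and every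
deterministic algorithm `π` for the `K`-round hypercube instance, the Bayes
expected pseudo-regret with `μ` uniform on `{−Δ,Δ}^d`, `Δ = 1/√(96K)`, is at
least `d·√(K·σ²)/(8·√6)`. -/
theorem fixed_variance_bayes_regret_lower_bound
    (d K : ℕ) (σ : ℝ) (π : Alg d)
    (hd : 2 ≤ d) (hK : (3 : ℝ) / 2 * (d : ℝ) ^ 2 ≤ (K : ℝ))
    (hσ0 : 0 < σ) (hσ1 : σ ≤ 1) :
    (d : ℝ) * Real.sqrt ((K : ℝ) * σ ^ 2) / (8 * Real.sqrt 6) ≤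
      bayesRegret d K σ π :=
  fixed_variance_bayes_regret_lower_bound_general d K σ π hK hσ0

end HypercubeBandit
end

section
/- Let d ≥ 1, K ≥ 2d, μ ∈ ℝ^d, and let D_1,…,D_K ⊆ ℝ^d be nonempty finite decision sets (each D_k possibly chosen as a function of the learner's past actions and observed rewards) such that max_{x∈D_k}⟨μ,x⟩ − min_{x∈D_k}⟨μ,x⟩ ≤ 1 for every k. Then there exist a strong adversary choosing σ_k ∈ {0,1} as a function of D_k and the past interaction, and a learner choosing x_k ∈ D_k as a function of D_1,…,D_k, σ_1,…,σ_k and the observed rewards r_1,…,r_{k−1} (where r_j = ⟨μ,x_j⟩ exactly whenever σ_j = 0), such that on every realization: (i) ∑_{k=1}^K (max_{x∈D_k}⟨μ,x⟩ − ⟨μ,x_k⟩) ≤ d, and (ii) ∑_{k=1}^K σ_k² ≥ K/2. Concretely, σ_k = 0 exactly on the rounds in which D_k contains a vector outside the linear span of the previously selected actions, and there are at most d such rounds. -/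
/-!
Whenever the current decision set contains an action outside the span of the actions played so far,
the adversary announces noise level `0` and the learner plays such an action; each such round
strictly enlarges the span, so there are at most `d` of them, each costing regret at most the
width `1`. In every other round the decision set lies in the span of past actions, which is spanned
by actions whose rewards were observed exactly, so `⟨μ, ·⟩` is known on it: the learner plays
greedily with zero regret and the adversary can afford noise level `1`. Hence the regret is at
most `d` while at least `K - d ≥ K / 2` rounds carry variance `1`.
-/

open Finset Module

theorem Fin.card_filter_univ_eq_card_filter_range (P : ℕ → Prop) [DecidablePred P] (n : ℕ) :
    #{k : Fin n | P k} = #{k ∈ range n | P k} := by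
  simp only [card_filter]
  exact Fin.sum_univ_eq_sum_range (fun k => if P k then 1 else 0) n

section Exploration

variable {𝕜 V R : Type*} [DivisionRing 𝕜] [AddCommGroup V] [Module 𝕜 V]

open Classical in
theorem Submodule.card_filter_lt_succ_le_finrank [FiniteDimensional 𝕜 V]
    {s : ℕ → Submodule 𝕜 V} (hs : Monotone s) (n : ℕ) :
    #{k ∈ range n | s k < s (k + 1)} ≤ finrank 𝕜 (s n) := by
  induction n with
  | zero => simp
  | succ n ih =>
    rw [range_add_one, filter_insert]
    split_ifs with hlt
    · rw [card_insert_of_notMem (by simp)]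
      exact ih.trans_lt (Submodule.finrank_lt_finrank_of_lt hlt)
    · exact ih.trans (Submodule.finrank_mono (hs n.le_succ))

variable (𝕜) in
def actionSpan (h : List (V × R)) : Submodule 𝕜 V :=
  Submodule.span 𝕜 {v | ∃ p ∈ h, p.1 = v}

theorem actionSpan_le_append (h l : List (V × R)) : actionSpan 𝕜 h ≤ actionSpan 𝕜 (h ++ l) :=
  Submodule.span_mono fun _ ⟨p, hp, hpv⟩ => ⟨p, List.mem_append_left l hp, hpv⟩

theorem mem_actionSpan_append_singleton (h : List (V × R)) (x : V) (r : R) :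
    x ∈ actionSpan 𝕜 (h ++ [(x, r)]) :=
  Submodule.subset_span ⟨(x, r), by simp, rfl⟩

open Classical in
theorem card_filter_notMem_actionSpan_le [FiniteDimensional 𝕜 V] {hist : ℕ → List (V × R)}
    {a : ℕ → V} {r : ℕ → R} (hstep : ∀ k, hist (k + 1) = hist k ++ [(a k, r k)]) (n : ℕ) :
    #{k ∈ range n | a k ∉ actionSpan 𝕜 (hist k)} ≤ finrank 𝕜 V := by
  have hs : Monotone fun k => actionSpan 𝕜 (hist k) :=
    monotone_nat_of_le_succ fun k => hstep k ▸ actionSpan_le_append _ _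
  calc _ ≤ #{k ∈ range n | actionSpan 𝕜 (hist k) < actionSpan 𝕜 (hist (k + 1))} := by
        refine card_le_card (monotone_filter_right _ fun k _ hk => (hs k.le_succ).lt_of_ne ?_)
        intro (heq : actionSpan 𝕜 (hist k) = actionSpan 𝕜 (hist (k + 1)))
        have hmem : a k ∈ actionSpan 𝕜 (hist (k + 1)) :=
          hstep k ▸ mem_actionSpan_append_singleton _ _ _
        exact hk (heq ▸ hmem)
    _ ≤ finrank 𝕜 (actionSpan 𝕜 (hist n)) := Submodule.card_filter_lt_succ_le_finrank hs n
    _ ≤ finrank 𝕜 V := Submodule.finrank_le _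

open Classical in
noncomputable def exploreOrGreedy (S : Submodule 𝕜 V) (f : V → ℝ) (D : Finset V) : V :=
  if hx : ∃ x ∈ D, x ∉ S then hx.choose
  else if hne : D.Nonempty then (D.exists_max_image f hne).choose else 0

open Classical in
noncomputable def strongAdversary (S : Submodule 𝕜 V) (D : Finset V) : ℝ :=
  if (D : Set V) ⊆ S then 1 else 0

variable {S : Submodule 𝕜 V} {f : V → ℝ} {D : Finset V}

theorem exploreOrGreedy_mem (hne : D.Nonempty) : exploreOrGreedy S f D ∈ D := by
  unfold exploreOrGreedy
  split_ifs with hx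
  · exact hx.choose_spec.1
  · exact (D.exists_max_image f hne).choose_spec.1

theorem exploreOrGreedy_notMem (hD : ¬ (D : Set V) ⊆ S) : exploreOrGreedy S f D ∉ S := by
  obtain ⟨x, hxD, hxS⟩ := Set.not_subset.mp hD
  have hx : ∃ x ∈ D, x ∉ S := ⟨x, hxD, hxS⟩
  rw [exploreOrGreedy, dif_pos hx]
  exact hx.choose_spec.2

theorem le_exploreOrGreedy (hD : (D : Set V) ⊆ S) {x : V} (hx : x ∈ D) :
    f x ≤ f (exploreOrGreedy S f D) := by
  have hnone : ¬ ∃ x ∈ D, x ∉ S := fun ⟨y, hyD, hyS⟩ => hyS (hD hyD)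
  rw [exploreOrGreedy, dif_neg hnone, dif_pos ⟨x, hx⟩]
  exact (D.exists_max_image f ⟨x, hx⟩).choose_spec.2 x hx

theorem strongAdversary_eq_zero_or_one (S : Submodule 𝕜 V) (D : Finset V) :
    strongAdversary S D = 0 ∨ strongAdversary S D = 1 := by
  unfold strongAdversary
  split_ifs <;> simp

theorem strongAdversary_eq_zero_iff : strongAdversary S D = 0 ↔ ¬ (D : Set V) ⊆ S := by
  unfold strongAdversary
  split_ifs <;> simp [*]

theorem one_sub_strongAdversary [Decidable ((D : Set V) ⊆ S)] :
    1 - strongAdversary S D = if ¬ (D : Set V) ⊆ S then 1 else 0 := by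
  unfold strongAdversary
  split_ifs <;> simp_all

theorem strongAdversary_sq : strongAdversary S D ^ 2 = strongAdversary S D := by
  rcases strongAdversary_eq_zero_or_one S D with h | h <;> simp [h]

theorem sup'_sub_exploreOrGreedy_le (hne : D.Nonempty) (hwidth : D.sup' hne f - D.inf' hne f ≤ 1) :
    D.sup' hne f - f (exploreOrGreedy S f D) ≤ 1 - strongAdversary S D := by
  by_cases hD : (D : Set V) ⊆ S
  · have hmax : D.sup' hne f ≤ f (exploreOrGreedy S f D) :=
      sup'_le hne f fun x hx => le_exploreOrGreedy hD hx
    simp only [strongAdversary, if_pos hD]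
    linarith
  · have hmin : D.inf' hne f ≤ f (exploreOrGreedy S f D) := inf'_le f (exploreOrGreedy_mem hne)
    simp only [strongAdversary, if_neg hD]
    linarith

end Exploration

theorem strong_adversary_breaks_lower_bound_general
    (d K : ℕ) (hK : 2 * d ≤ K) (μ : Fin d → ℝ)
    (D : ℕ → List ((Fin d → ℝ) × ℝ) → Finset (Fin d → ℝ))
    (hDne : ∀ k h, (D k h).Nonempty)
    (hwidth : ∀ k h,
      (D k h).sup' (hDne k h) (fun x => ∑ i, μ i * x i) -
        (D k h).inf' (hDne k h) (fun x => ∑ i, μ i * x i) ≤ 1) :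
    ∃ (adv : Finset (Fin d → ℝ) → List ((Fin d → ℝ) × ℝ) → ℝ)
      (lrn : Finset (Fin d → ℝ) → ℝ → List ((Fin d → ℝ) × ℝ) → (Fin d → ℝ)),
      (∀ Dk h, adv Dk h = 0 ∨ adv Dk h = 1) ∧
      (∀ Dk s h, Dk.Nonempty → lrn Dk s h ∈ Dk) ∧
      (∀ (r : ℕ → ℝ) (hist : ℕ → List ((Fin d → ℝ) × ℝ)),
        hist 0 = [] →
        (∀ k : ℕ,
          hist (k + 1) = hist k ++
            [(lrn (D k (hist k)) (adv (D k (hist k)) (hist k)) (hist k), r k)]) →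
        (∀ k : ℕ, k < K → adv (D k (hist k)) (hist k) = 0 →
          r k = ∑ i, μ i *
            lrn (D k (hist k)) (adv (D k (hist k)) (hist k)) (hist k) i) →
        (∑ k : Fin K,
            ((D (k : ℕ) (hist (k : ℕ))).sup' (hDne (k : ℕ) (hist (k : ℕ)))
                (fun x => ∑ i, μ i * x i) -
              ∑ i, μ i *
                lrn (D (k : ℕ) (hist (k : ℕ)))
                  (adv (D (k : ℕ) (hist (k : ℕ))) (hist (k : ℕ)))
                  (hist (k : ℕ)) i) ≤ (d : ℝ)) ∧
        ((K : ℝ) / 2 ≤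
          ∑ k : Fin K, (adv (D (k : ℕ) (hist (k : ℕ))) (hist (k : ℕ))) ^ 2) ∧
        (∀ k : Fin K,
          adv (D (k : ℕ) (hist (k : ℕ))) (hist (k : ℕ)) = 0 ↔
            ¬ (↑(D (k : ℕ) (hist (k : ℕ))) : Set (Fin d → ℝ)) ⊆
              ↑(Submodule.span ℝ {v | ∃ p ∈ hist (k : ℕ), p.1 = v})) ∧
        ({k : Fin K |
            ¬ (↑(D (k : ℕ) (hist (k : ℕ))) : Set (Fin d → ℝ)) ⊆
              ↑(Submodule.span ℝ {v | ∃ p ∈ hist (k : ℕ), p.1 = v})}.ncard ≤ d)) := by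
  classical
  set f : (Fin d → ℝ) → ℝ := fun x => ∑ i, μ i * x i
  refine ⟨fun Dk h => strongAdversary (actionSpan ℝ h) Dk,
    fun Dk _ h => exploreOrGreedy (actionSpan ℝ h) f Dk,
    fun _ _ => strongAdversary_eq_zero_or_one _ _, fun _ _ _ => exploreOrGreedy_mem, ?_⟩
  intro r hist _ hstep _
  set σ : ℕ → ℝ := fun k => strongAdversary (actionSpan ℝ (hist k)) (D k (hist k))
  set P : ℕ → Prop := fun k => ¬ (D k (hist k) : Set (Fin d → ℝ)) ⊆ actionSpan ℝ (hist k)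
  have hexplore : #{k : Fin K | P k} ≤ d := by
    rw [Fin.card_filter_univ_eq_card_filter_range P]
    calc _ ≤ #{k ∈ range K |
            exploreOrGreedy (actionSpan ℝ (hist k)) f (D k (hist k)) ∉ actionSpan ℝ (hist k)} :=
          card_le_card (monotone_filter_right _ fun _ _ => exploreOrGreedy_notMem)
      _ ≤ finrank ℝ (Fin d → ℝ) := card_filter_notMem_actionSpan_le hstep K
      _ = d := finrank_fin_fun ℝ
  have hexploreSum : ∑ k : Fin K, (1 - σ k) = #{k : Fin K | P k} := by
    simp only [σ, one_sub_strongAdversary, sum_boole]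
    rfl
  refine ⟨?_, ?_, fun _ => strongAdversary_eq_zero_iff, ?_⟩
  · calc _ ≤ ∑ k : Fin K, (1 - σ k) :=
          sum_le_sum fun _ _ => sup'_sub_exploreOrGreedy_le _ (hwidth _ _)
      _ ≤ d := hexploreSum ▸ by exact_mod_cast hexplore
  · have hK' : (2 * d : ℝ) ≤ K := by exact_mod_cast hK
    have hexplore' : (#{k : Fin K | P k} : ℝ) ≤ d := by exact_mod_cast hexplore
    simp only [strongAdversary_sq]
    rw [sum_sub_distrib, sum_const, card_univ, Fintype.card_fin, nsmul_one] at hexploreSum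
    linarith
  · rw [Set.ncard_eq_toFinset_card', Set.toFinset_ofPred]
    exact hexplore

/-- strong-adversary counter-example.  Given `d ≥ 1`, `K ≥ 2d`,
`μ ∈ ℝ^d` and nonempty finite decision sets `D k` (each possibly a function of
the past action–reward history) whose mean-reward width is at most `1`, there
are a strong adversary (choosing `σ_k ∈ {0,1}` from `D_k` and the past
interaction) and a learner (choosing `x_k ∈ D_k` from the decision sets,
variances and observed rewards, where `r_j = ⟨μ,x_j⟩` exactly whenever
`σ_j = 0`) such that on every realization: (i) the regret is at most `d`;
(ii) `∑_k σ_k² ≥ K/2`; moreover `σ_k = 0` exactly on the rounds in which `D_k`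
contains a vector outside the span of the previously selected actions, and
there are at most `d` such rounds. -/
theorem strong_adversary_breaks_lower_bound
    (d K : ℕ) (hd : 1 ≤ d) (hK : 2 * d ≤ K) (μ : Fin d → ℝ)
    (D : ℕ → List ((Fin d → ℝ) × ℝ) → Finset (Fin d → ℝ))
    (hDne : ∀ k h, (D k h).Nonempty)
    (hwidth : ∀ k h,
      (D k h).sup' (hDne k h) (fun x => ∑ i, μ i * x i) -
        (D k h).inf' (hDne k h) (fun x => ∑ i, μ i * x i) ≤ 1) :
    ∃ (adv : Finset (Fin d → ℝ) → List ((Fin d → ℝ) × ℝ) → ℝ)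
      (lrn : Finset (Fin d → ℝ) → ℝ → List ((Fin d → ℝ) × ℝ) → (Fin d → ℝ)),
      (∀ Dk h, adv Dk h = 0 ∨ adv Dk h = 1) ∧
      (∀ Dk s h, Dk.Nonempty → lrn Dk s h ∈ Dk) ∧
      (∀ (r : ℕ → ℝ) (hist : ℕ → List ((Fin d → ℝ) × ℝ)),
        hist 0 = [] →
        (∀ k : ℕ,
          hist (k + 1) = hist k ++
            [(lrn (D k (hist k)) (adv (D k (hist k)) (hist k)) (hist k), r k)]) →
        (∀ k : ℕ, k < K → adv (D k (hist k)) (hist k) = 0 →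
          r k = ∑ i, μ i *
            lrn (D k (hist k)) (adv (D k (hist k)) (hist k)) (hist k) i) →
        (∑ k : Fin K,
            ((D (k : ℕ) (hist (k : ℕ))).sup' (hDne (k : ℕ) (hist (k : ℕ)))
                (fun x => ∑ i, μ i * x i) -
              ∑ i, μ i *
                lrn (D (k : ℕ) (hist (k : ℕ)))
                  (adv (D (k : ℕ) (hist (k : ℕ))) (hist (k : ℕ)))
                  (hist (k : ℕ)) i) ≤ (d : ℝ)) ∧
        ((K : ℝ) / 2 ≤
          ∑ k : Fin K, (adv (D (k : ℕ) (hist (k : ℕ))) (hist (k : ℕ))) ^ 2) ∧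
        (∀ k : Fin K,
          adv (D (k : ℕ) (hist (k : ℕ))) (hist (k : ℕ)) = 0 ↔
            ¬ (↑(D (k : ℕ) (hist (k : ℕ))) : Set (Fin d → ℝ)) ⊆
              ↑(Submodule.span ℝ {v | ∃ p ∈ hist (k : ℕ), p.1 = v})) ∧
        ({k : Fin K |
            ¬ (↑(D (k : ℕ) (hist (k : ℕ))) : Set (Fin d → ℝ)) ⊆
              ↑(Submodule.span ℝ {v | ∃ p ∈ hist (k : ℕ), p.1 = v})}.ncard ≤ d)) :=
  strong_adversary_breaks_lower_bound_general d K hK μ D hDne hwidth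
end

section
/- Let K ≥ 2 and d ≥ 2 be integers, let L = ⌈log₂ K⌉ + 1, suppose L divides d, and set d_i = d/L. Let σ_1,…,σ_K ∈ [0,1] satisfy ∑_{k=1}^K σ_k² ≥ 1 + 384·d². Define K_0 = {k ∈ [K] : σ_k ≤ 1/K}, and for i = 1,…,L−1, K_i = {k ∈ [K] : 2^{i−1}/K < σ_k ≤ 2^i/K} and σ(i) = 2^{i−1}/K. If nonnegative reals R_0, R_1, …, R_{L−1} satisfy R_i ≥ 1{|K_i| ≥ 1.5·d_i²} · d_i·σ(i)·√(|K_i|)/(8·√6) for every i ∈ {1,…,L−1}, then ∑_{i=0}^{L−1} R_i ≥ d·√(∑_{k=1}^K σ_k² − 1)/(32·√6·L). -/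
/-!
Outside `K_1, …, K_{L-1}` every `σ_k ≤ 1/K`, so these groups carry all of `∑ σ_k²` up to `1`.
A group with fewer than `θ = 1.5 d_i²` elements carries at most `θ`, hence the small groups
carry at most `1.5 d²`, which the hypothesis `∑ σ_k² - 1 ≥ 384 d²` makes negligible. On a large
group `σ_k ≤ 2 σ(i)`, so its mass is at most `4 σ(i)² |K_i|`, and subadditivity of the square root
turns `∑ σ(i)² |K_i| ≥ (∑ σ_k² - 1)/16` into `∑ σ(i) √|K_i| ≥ √(∑ σ_k² - 1)/4`, which is the claim
after multiplying by `d_i / (8√6) = d / (8√6 L)`.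
-/

open Finset

lemma exists_mem_Ioc_pred_of_lt_of_le {α : Type*} [LinearOrder α] (t : ℕ → α) {x : α} {m : ℕ}
    (h0 : t 0 < x) (hm : x ≤ t m) : ∃ i ∈ Ico 1 (m + 1), x ∈ Set.Ioc (t (i - 1)) (t i) := by
  induction m with
  | zero => exact absurd hm (not_le.mpr h0)
  | succ m ih =>
    by_cases h : x ≤ t m
    · obtain ⟨i, hi, hx⟩ := ih h
      exact ⟨i, Ico_subset_Ico_right (Nat.le_succ _) hi, hx⟩
    · exact ⟨m + 1, by simp, by simpa using not_le.mp h, hm⟩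

lemma sum_le_card_mul_add_sum_sum {ι κ : Type*} [Fintype κ] {f : κ → ℝ} (hf : ∀ k, 0 ≤ f k)
    {ε : ℝ} (hε : 0 ≤ ε) (s : Finset ι) (A : ι → Finset κ)
    (hA : ∀ k, ε < f k → ∃ i ∈ s, k ∈ A i) :
    ∑ k, f k ≤ Fintype.card κ * ε + ∑ i ∈ s, ∑ k ∈ A i, f k := by
  classical
  have hpoint : ∀ k, f k ≤ ε + ∑ i ∈ s, if k ∈ A i then f k else 0 := by
    intro k
    have hterm : ∀ i ∈ s, 0 ≤ if k ∈ A i then f k else 0 := fun _ _ => ite_nonneg (hf k) le_rfl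
    rcases le_or_gt (f k) ε with hk | hk
    · linarith [sum_nonneg hterm]
    · obtain ⟨i, hi, hki⟩ := hA k hk
      have := single_le_sum hterm hi
      rw [if_pos hki] at this
      linarith
  calc ∑ k, f k ≤ ∑ k, (ε + ∑ i ∈ s, if k ∈ A i then f k else 0) :=
        sum_le_sum fun k _ => hpoint k
    _ = Fintype.card κ * ε + ∑ i ∈ s, ∑ k ∈ A i, f k := by
        rw [sum_add_distrib, sum_comm]
        simp [sum_ite_mem]

lemma sum_sq_le_card_mul_sq {κ : Type*} {s : Finset κ} {f : κ → ℝ} {b : ℝ}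
    (h : ∀ k ∈ s, f k ∈ Set.Icc 0 b) : ∑ k ∈ s, f k ^ 2 ≤ #s * b ^ 2 := by
  simpa using sum_le_card_nsmul s (f · ^ 2) (b ^ 2) fun k hk =>
    pow_le_pow_left₀ (h k hk).1 (h k hk).2 2

/-- The peeling step, read with `T i = ∑_{k ∈ K_i} σ_k²`, `c i = |K_i|` and `w i = σ(i)`. -/
lemma sqrt_div_four_le_sum_mul_sqrt {ι : Type*} {s : Finset ι} {T c w : ι → ℝ} {θ M : ℝ}
    (hc : ∀ i ∈ s, 0 ≤ c i) (hw : ∀ i ∈ s, 0 ≤ w i) (hTc : ∀ i ∈ s, T i ≤ c i)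
    (hTw : ∀ i ∈ s, T i ≤ c i * (2 * w i) ^ 2) (hθ0 : 0 ≤ θ) (hθ : 4 * #s * θ ≤ 3 * M)
    (hM : M ≤ ∑ i ∈ s, T i) :
    √M / 4 ≤ ∑ i ∈ s with θ ≤ c i, w i * √(c i) := by
  have hsmall : ∑ i ∈ s with ¬θ ≤ c i, T i ≤ #s * θ :=
    calc ∑ i ∈ s with ¬θ ≤ c i, T i ≤ ∑ i ∈ s with ¬θ ≤ c i, θ := sum_le_sum fun i hi => by
          rw [mem_filter, not_le] at hi
          exact (hTc i hi.1).trans hi.2.le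
      _ ≤ #s * θ := by
          rw [sum_const, nsmul_eq_mul]
          gcongr
          exact filter_subset _ _
  have hbig : M / 4 ≤ ∑ i ∈ s with θ ≤ c i, T i := by
    linarith [sum_filter_add_sum_filter_not s (θ ≤ c ·) T]
  have hsq : M / 16 ≤ ∑ i ∈ s with θ ≤ c i, (w i * √(c i)) ^ 2 := by
    have hT : ∑ i ∈ s with θ ≤ c i, T i ≤ ∑ i ∈ s with θ ≤ c i, 4 * (w i * √(c i)) ^ 2 :=
      sum_le_sum fun i hi => by
        have hi := (mem_filter.mp hi).1
        rw [mul_pow, Real.sq_sqrt (hc i hi)]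
        linarith [hTw i hi]
    rw [← mul_sum] at hT
    linarith
  have hterm : ∀ i ∈ {i ∈ s | θ ≤ c i}, 0 ≤ w i * √(c i) := fun i hi =>
    mul_nonneg (hw i (mem_filter.mp hi).1) (Real.sqrt_nonneg _)
  rw [div_le_iff₀ four_pos, Real.sqrt_le_left (by linarith [sum_nonneg hterm])]
  nlinarith [sum_sq_le_sq_sum_of_nonneg hterm]

/-- The group `K_i` for `i ≥ 1`; since `0 - 1 = 0` in `ℕ`, `dyadicGroup σs 0` is empty. -/
noncomputable def dyadicGroup {K : ℕ} (σs : Fin K → ℝ) (i : ℕ) : Finset (Fin K) :=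
  univ.filter fun k => (2 : ℝ) ^ (i - 1) / (K : ℝ) < σs k ∧ σs k ≤ (2 : ℝ) ^ i / (K : ℝ)

section dyadicGroup

variable {K : ℕ} {σs : Fin K → ℝ}

lemma mem_Icc_of_mem_dyadicGroup {i : ℕ} (hi : 1 ≤ i) {k : Fin K} (hk : k ∈ dyadicGroup σs i) :
    σs k ∈ Set.Icc 0 (2 * ((2 : ℝ) ^ (i - 1) / K)) := by
  obtain ⟨hlow, hup⟩ := (mem_filter.mp hk).2
  refine ⟨(by positivity : (0 : ℝ) ≤ 2 ^ (i - 1) / K).trans hlow.le, ?_⟩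
  rwa [← mul_div_assoc, ← pow_succ', Nat.sub_add_cancel hi]

lemma sum_sq_le_one_add_sum_dyadicGroup (hK : 0 < K) (hσ : ∀ k, σs k ∈ Set.Icc 0 1) :
    ∑ k, σs k ^ 2 ≤ 1 + ∑ i ∈ Ico 1 (Nat.clog 2 K + 1), ∑ k ∈ dyadicGroup σs i, σs k ^ 2 := by
  have hK' : (0 : ℝ) < K := by exact_mod_cast hK
  have hcover : ∀ k, (K : ℝ)⁻¹ ^ 2 < σs k ^ 2 →
      ∃ i ∈ Ico 1 (Nat.clog 2 K + 1), k ∈ dyadicGroup σs i := by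
    intro k hk
    have hlow : (2 : ℝ) ^ 0 / K < σs k := by
      simpa using lt_of_pow_lt_pow_left₀ 2 (hσ k).1 hk
    have hup : σs k ≤ (2 : ℝ) ^ Nat.clog 2 K / K := by
      refine (hσ k).2.trans ((one_le_div hK').mpr ?_)
      exact_mod_cast Nat.le_pow_clog one_lt_two K
    obtain ⟨i, hi, hki⟩ := exists_mem_Ioc_pred_of_lt_of_le (fun i => (2 : ℝ) ^ i / K) hlow hup
    exact ⟨i, hi, mem_filter.mpr ⟨mem_univ k, hki⟩⟩
  have hKε : (K : ℝ) * (K : ℝ)⁻¹ ^ 2 ≤ 1 := by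
    rw [sq, ← mul_assoc, mul_inv_cancel₀ hK'.ne', one_mul]
    exact inv_le_one_of_one_le₀ (by exact_mod_cast hK)
  have := sum_le_card_mul_add_sum_sum (fun k => sq_nonneg (σs k)) (by positivity) _ _ hcover
  rw [Fintype.card_fin] at this
  linarith

end dyadicGroup

theorem peeling_arithmetic_core_general (K d : ℕ) (hK : 2 ≤ K)
    (hdvd : (Nat.clog 2 K + 1) ∣ d)
    (σs : Fin K → ℝ) (hσ : ∀ k, 0 ≤ σs k ∧ σs k ≤ 1)
    (hsum : 1 + 384 * (d : ℝ) ^ 2 ≤ ∑ k, σs k ^ 2)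
    (R : ℕ → ℝ) (hR : ∀ i, 0 ≤ R i)
    (hRlb : ∀ i, 1 ≤ i → i ≤ Nat.clog 2 K →
      (if (3 : ℝ) / 2 * ((d / (Nat.clog 2 K + 1) : ℕ) : ℝ) ^ 2 ≤
          (((Finset.univ.filter (fun k : Fin K =>
              (2 : ℝ) ^ (i - 1) / (K : ℝ) < σs k ∧
                σs k ≤ (2 : ℝ) ^ i / (K : ℝ))).card : ℕ) : ℝ)
       then
         ((d / (Nat.clog 2 K + 1) : ℕ) : ℝ) * ((2 : ℝ) ^ (i - 1) / (K : ℝ)) *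
           Real.sqrt (((Finset.univ.filter (fun k : Fin K =>
              (2 : ℝ) ^ (i - 1) / (K : ℝ) < σs k ∧
                σs k ≤ (2 : ℝ) ^ i / (K : ℝ))).card : ℕ) : ℝ) / (8 * Real.sqrt 6)
       else 0) ≤ R i) :
    (d : ℝ) * Real.sqrt ((∑ k, σs k ^ 2) - 1) /
        (32 * Real.sqrt 6 * ((Nat.clog 2 K : ℕ) + 1 : ℝ)) ≤
      ∑ i ∈ Finset.range (Nat.clog 2 K + 1), R i := by
  set L := Nat.clog 2 K + 1
  set n := d / L
  set S := ∑ k, σs k ^ 2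
  have hnL : (n : ℝ) * L = d := by exact_mod_cast Nat.div_mul_cancel hdvd
  have hθ : 4 * #(Ico 1 L) * (3 / 2 * (n : ℝ) ^ 2) ≤ 3 * (S - 1) := by
    have hcard : (#(Ico 1 L) : ℝ) ≤ L := by
      exact_mod_cast (Nat.card_Ico 1 L).trans_le (Nat.sub_le L 1)
    have hL : (1 : ℝ) ≤ L := by exact_mod_cast Nat.le_add_left 1 _
    nlinarith [mul_le_mul_of_nonneg_left hcard (sq_nonneg (n : ℝ)), sq_nonneg (n : ℝ)]
  set θ : ℝ := 3 / 2 * (n : ℝ) ^ 2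
  set w : ℕ → ℝ := fun i => (2 : ℝ) ^ (i - 1) / K
  set c : ℕ → ℝ := fun i => #(dyadicGroup σs i)
  have hpeel : √(S - 1) / 4 ≤ ∑ i ∈ Ico 1 L with θ ≤ c i, w i * √(c i) :=
    sqrt_div_four_le_sum_mul_sqrt (fun i _ => by positivity) (fun i _ => by positivity)
      (fun i _ => by simpa using sum_sq_le_card_mul_sq fun k _ => hσ k)
      (fun i hi => sum_sq_le_card_mul_sq fun k hk =>
        mem_Icc_of_mem_dyadicGroup (mem_Ico.mp hi).1 hk)
      (by positivity) hθ (by linarith [sum_sq_le_one_add_sum_dyadicGroup (by omega) hσ])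
  have hRi : ∀ i ∈ {i ∈ Ico 1 L | θ ≤ c i}, n * w i * √(c i) / (8 * √6) ≤ R i := fun i hi => by
    obtain ⟨hi, hbig⟩ := mem_filter.mp hi
    exact (if_pos hbig).symm.trans_le (hRlb i (mem_Ico.mp hi).1 (by grind))
  have hsub : {i ∈ Ico 1 L | θ ≤ c i} ⊆ range L := fun i hi =>
    mem_range.mpr (mem_Ico.mp (mem_filter.mp hi).1).2
  calc (d : ℝ) * √(S - 1) / (32 * √6 * ((Nat.clog 2 K : ℕ) + 1 : ℝ))
      = n / (8 * √6) * (√(S - 1) / 4) := by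
        rw [← hnL]
        push_cast [L]
        field_simp
        ring
    _ ≤ n / (8 * √6) * ∑ i ∈ Ico 1 L with θ ≤ c i, w i * √(c i) := by gcongr
    _ = ∑ i ∈ Ico 1 L with θ ≤ c i, n * w i * √(c i) / (8 * √6) := by
        rw [mul_sum]
        exact sum_congr rfl fun i _ => by ring
    _ ≤ ∑ i ∈ Ico 1 L with θ ≤ c i, R i := sum_le_sum hRi
    _ ≤ ∑ i ∈ range L, R i := sum_le_sum_of_subset_of_nonneg hsub fun i _ _ => hR i

/-- the arithmetic core of the peeling argument.  With
`L = ⌈log₂ K⌉ + 1`, `d_i = d/L`, groups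
`K_i = {k : 2^{i−1}/K < σ_k ≤ 2^i/K}` and thresholds `σ(i) = 2^{i−1}/K`, if
nonnegative reals `R_0, …, R_{L−1}` satisfy
`R_i ≥ 1{|K_i| ≥ 1.5·d_i²} · d_i·σ(i)·√|K_i|/(8√6)` for `i = 1, …, L−1`,
then `∑_{i=0}^{L−1} R_i ≥ d·√(∑_k σ_k² − 1)/(32·√6·L)`. -/
theorem peeling_arithmetic_core (K d : ℕ) (hK : 2 ≤ K) (hd : 2 ≤ d)
    (hdvd : (Nat.clog 2 K + 1) ∣ d)
    (σs : Fin K → ℝ) (hσ : ∀ k, 0 ≤ σs k ∧ σs k ≤ 1)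
    (hsum : 1 + 384 * (d : ℝ) ^ 2 ≤ ∑ k, σs k ^ 2)
    (R : ℕ → ℝ) (hR : ∀ i, 0 ≤ R i)
    (hRlb : ∀ i, 1 ≤ i → i ≤ Nat.clog 2 K →
      (if (3 : ℝ) / 2 * ((d / (Nat.clog 2 K + 1) : ℕ) : ℝ) ^ 2 ≤
          (((Finset.univ.filter (fun k : Fin K =>
              (2 : ℝ) ^ (i - 1) / (K : ℝ) < σs k ∧
                σs k ≤ (2 : ℝ) ^ i / (K : ℝ))).card : ℕ) : ℝ)
       then
         ((d / (Nat.clog 2 K + 1) : ℕ) : ℝ) * ((2 : ℝ) ^ (i - 1) / (K : ℝ)) *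
           Real.sqrt (((Finset.univ.filter (fun k : Fin K =>
              (2 : ℝ) ^ (i - 1) / (K : ℝ) < σs k ∧
                σs k ≤ (2 : ℝ) ^ i / (K : ℝ))).card : ℕ) : ℝ) / (8 * Real.sqrt 6)
       else 0) ≤ R i) :
    (d : ℝ) * Real.sqrt ((∑ k, σs k ^ 2) - 1) /
        (32 * Real.sqrt 6 * ((Nat.clog 2 K : ℕ) + 1 : ℝ)) ≤
      ∑ i ∈ Finset.range (Nat.clog 2 K + 1), R i :=
  peeling_arithmetic_core_general K d hK hdvd σs hσ hsum R hR hRlb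
end
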